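/- The deviation of the observed group mean from the true group mean satisfies μ_g^O − μ_g = Cov(O, X | G)/α_g = ρ_g · √((1−α_g)/α_g) · σ_{X|G}. -/

import Mathlib

/-!
On the conditional space `μ[|G]` the indicator `O` of `S = {O = 1}` has mean `α = P(S)`, and
`E[O X] = ∫_S X = α · E[X | S]`. Hence `Cov(O, X) = E[O X] - α E[X] = α (E[X | S] - E[X])`, and
conditioning on `G` then on `S` is conditioning on `S ∩ G`. The second form only rewrites
`1 / α = √((1 - α) / α) / √(α (1 - α))`.
-/

open MeasureTheory ProbabilityTheory

/-- Covariance of two real random variables under the measure `μ`. -/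
noncomputable def condCov {Ω : Type*} [MeasurableSpace Ω] (μ : Measure Ω) (O X : Ω → ℝ) : ℝ :=
  ∫ ω, (O ω - ∫ x, O x ∂μ) * (X ω - ∫ x, X x ∂μ) ∂μ

lemma Real.sqrt_one_sub_div_self {a : ℝ} (ha : 0 ≤ a) : √((1 - a) / a) = √(a * (1 - a)) / a := by
  have h : (1 - a) / a = a * (1 - a) / a ^ 2 := by
    rcases ha.eq_or_lt with rfl | ha
    · simp
    · field_simp
  rw [h, Real.sqrt_div' _ (sq_nonneg a), Real.sqrt_sq ha]

lemma eq_indicator_preimage_one {Ω : Type*} {O : Ω → ℝ} (hO : ∀ ω, O ω = 0 ∨ O ω = 1) :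
    O = (O ⁻¹' {1}).indicator 1 := by
  funext ω
  rcases hO ω with h | h <;> simp [Set.indicator, h]

lemma MeasureTheory.MemLp.cond {Ω E : Type*} [MeasurableSpace Ω] [NormedAddCommGroup E]
    {μ : Measure Ω} {s : Set Ω} {f : Ω → E} {p : ENNReal} (hf : MemLp f p μ) (hs : μ s ≠ 0) :
    MemLp f p μ[|s] :=
  (hf.restrict s).smul_measure (ENNReal.inv_ne_top.2 hs)

namespace ProbabilityTheory

variable {Ω : Type*} [MeasurableSpace Ω] {μ : Measure Ω} {s : Set Ω} {X : Ω → ℝ}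

lemma integral_cond {E : Type*} [NormedAddCommGroup E] [NormedSpace ℝ E] (f : Ω → E) :
    ∫ ω, f ω ∂μ[|s] = (μ.real s)⁻¹ • ∫ ω in s, f ω ∂μ := by
  rw [cond, integral_smul_measure, ENNReal.toReal_inv, measureReal_def]

lemma integral_cond_sub_integral [IsProbabilityMeasure μ] (hs : MeasurableSet s) (hμs : μ s ≠ 0)
    (hX : MemLp X 2 μ) :
    ∫ ω, X ω ∂μ[|s] - ∫ ω, X ω ∂μ = cov[s.indicator 1, X; μ] / μ.real s := by
  have hμs' : μ.real s ≠ 0 := (measureReal_ne_zero_iff (measure_ne_top μ s)).2 hμs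
  have hind : MemLp (s.indicator (1 : Ω → ℝ)) 2 μ :=
    (memLp_top_const (1 : ℝ)).indicator hs |>.mono_exponent le_top
  have hmul : s.indicator 1 * X = s.indicator X := by
    funext ω
    by_cases hω : ω ∈ s <;> simp [hω]
  rw [covariance_eq_sub hind hX, hmul, integral_indicator hs, integral_indicator_one hs,
    integral_cond, smul_eq_mul]
  field_simp

end ProbabilityTheory

theorem observed_group_mean_deviation_general
    {Ω : Type*} [MeasurableSpace Ω] (μ : Measure Ω) [IsProbabilityMeasure μ]
    (X O : Ω → ℝ) (G : Set Ω)
    (hOm : Measurable O) (hG : MeasurableSet G)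
    (hX2 : MemLp X 2 μ)
    (hO01 : ∀ ω, O ω = 0 ∨ O ω = 1)
    (αg σXG ρg μg μgO : ℝ)
    (hαg : αg = ∫ ω, O ω ∂(μ[|G]))
    (hμg : μg = ∫ ω, X ω ∂(μ[|G]))
    (hμgO : μgO = ∫ ω, X ω ∂(μ[|O ⁻¹' {1} ∩ G]))
    (hρg : ρg = condCov (μ[|G]) O X / (Real.sqrt (αg * (1 - αg)) * σXG))
    (hα0 : 0 < αg) (hα1 : αg < 1) (hσpos : 0 < σXG) :
    μgO - μg = condCov (μ[|G]) O X / αg ∧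
    μgO - μg = ρg * Real.sqrt ((1 - αg) / αg) * σXG := by
  set S := O ⁻¹' {1}
  have hS : MeasurableSet S := hOm (measurableSet_singleton 1)
  have hO : O = S.indicator 1 := eq_indicator_preimage_one hO01
  have hG0 : μ G ≠ 0 := fun h => hα0.ne' <| by
    rw [hαg, cond_eq_zero_of_meas_eq_zero h, integral_zero_measure]
  have := cond_isProbabilityMeasure (μ := μ) hG0
  have hαS : αg = (μ[|G]).real S := by rw [hαg, hO, integral_indicator_one hS]
  have hS0 : μ[|G] S ≠ 0 := fun h => hα0.ne' (by rw [hαS, measureReal_def, h, ENNReal.toReal_zero])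
  have hmean : μgO - μg = condCov (μ[|G]) O X / αg := by
    have hcov : condCov (μ[|G]) O X = cov[O, X; μ[|G]] := rfl
    rw [hμgO, hμg, hαS, hcov, hO, Set.inter_comm, ← cond_cond_eq_cond_inter hG hS]
    exact integral_cond_sub_integral hS hS0 (hX2.cond hG0)
  have hσO : 0 < √(αg * (1 - αg)) := Real.sqrt_pos.2 (mul_pos hα0 (sub_pos.2 hα1))
  refine ⟨hmean, hmean.trans ?_⟩
  rw [hρg, Real.sqrt_one_sub_div_self hα0.le]
  field_simp

/-- The deviation of the observed group mean from the true group mean: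
`μ_g^O − μ_g = Cov(O, X | G)/α_g = ρ_g √((1−α_g)/α_g) σ_{X|G}`. -/
theorem observed_group_mean_deviation
    {Ω : Type*} [MeasurableSpace Ω] (μ : Measure Ω) [IsProbabilityMeasure μ]
    (X O : Ω → ℝ) (G : Set Ω)
    (hXm : Measurable X) (hOm : Measurable O) (hG : MeasurableSet G)
    (hX2 : MemLp X 2 μ)
    (hO01 : ∀ ω, O ω = 0 ∨ O ω = 1)
    (αg σXG ρg μg μgO : ℝ)
    (hαg : αg = ∫ ω, O ω ∂(μ[|G]))
    (hμg : μg = ∫ ω, X ω ∂(μ[|G]))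
    (hμgO : μgO = ∫ ω, X ω ∂(μ[|O ⁻¹' {1} ∩ G]))
    (hσXG : σXG = Real.sqrt (variance X (μ[|G])))
    (hρg : ρg = condCov (μ[|G]) O X / (Real.sqrt (αg * (1 - αg)) * σXG))
    (hα0 : 0 < αg) (hα1 : αg < 1) (hσpos : 0 < σXG)
    (hpos1 : 0 < μ (O ⁻¹' {1} ∩ G)) :
    μgO - μg = condCov (μ[|G]) O X / αg ∧
    μgO - μg = ρg * Real.sqrt ((1 - αg) / αg) * σXG :=
  observed_group_mean_deviation_general μ X O G hOm hG hX2 hO01 αg σXG ρg μg μgO hαg hμg hμgO hρg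
    hα0 hα1 hσpos
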